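/- arXiv:1212.4026 — 9 statements merged into one kernel-verified Lean document; each statement's English description precedes it below -/
import Mathlib

section
/- Let ρ > 0, p > 0, and define μ₁, μ₂ = u + q/(2p) ∓ √(p/ρ + (q/(2p))²) and ω₁, ω₂ = ρ/2 ± ρ²q / (2√(ρ²q² + 4ρp³)). Then these satisfy the four moment equations: ω₁ + ω₂ = ρ, ω₁μ₁ + ω₂μ₂ = ρu, ω₁μ₁² + ω₂μ₂² = ρu² + p, and ω₁μ₁³ + ω₂μ₂³ = ρu³ + 3pu + q. -/
/-!
Centre the abscissas at `u`: they become `δ ∓ s` with `δ = q / (2p)` and `s² - δ² = p / ρ`, while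
`√(ρ²q² + 4ρp³) = 2ρp s` turns the weights into `ρ/2 ± ρδ / (2s)`. A two-point distribution of this
shape has central moments `ρ, 0, ρ (s² - δ²), 2ρδ (s² - δ²)`, i.e. `ρ, 0, p, q`, and translating by `u`
gives the raw moments by the binomial formula.
-/

lemma sqrt_sq_mul_sq_add_four_mul_cube {ρ p : ℝ} (hρ : 0 < ρ) (hp : 0 < p) (q : ℝ) :
    Real.sqrt (ρ^2*q^2 + 4*ρ*p^3) = 2*ρ*p * Real.sqrt (p/ρ + (q/(2*p))^2) := by
  have h : ρ^2*q^2 + 4*ρ*p^3 = (2*ρ*p)^2 * (p/ρ + (q/(2*p))^2) := by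
    field_simp
    ring
  rw [h, Real.sqrt_mul (by positivity), Real.sqrt_sq (by positivity)]

lemma central_moments_sub_add {s : ℝ} (hs : s ≠ 0) (ρ δ : ℝ) :
    (ρ/2 + ρ*δ/(2*s)) + (ρ/2 - ρ*δ/(2*s)) = ρ ∧
    (ρ/2 + ρ*δ/(2*s))*(δ - s) + (ρ/2 - ρ*δ/(2*s))*(δ + s) = 0 ∧
    (ρ/2 + ρ*δ/(2*s))*(δ - s)^2 + (ρ/2 - ρ*δ/(2*s))*(δ + s)^2 = ρ*(s^2 - δ^2) ∧
    (ρ/2 + ρ*δ/(2*s))*(δ - s)^3 + (ρ/2 - ρ*δ/(2*s))*(δ + s)^3 = 2*ρ*δ*(s^2 - δ^2) := by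
  refine ⟨by ring, ?_, ?_, ?_⟩ <;>
  · field_simp
    ring

lemma moments_add_of_central {ω₁ ω₂ x₁ x₂ m₀ m₂ m₃ : ℝ} (u : ℝ)
    (h₀ : ω₁ + ω₂ = m₀) (h₁ : ω₁*x₁ + ω₂*x₂ = 0)
    (h₂ : ω₁*x₁^2 + ω₂*x₂^2 = m₂) (h₃ : ω₁*x₁^3 + ω₂*x₂^3 = m₃) :
    ω₁ + ω₂ = m₀ ∧
    ω₁*(u + x₁) + ω₂*(u + x₂) = m₀*u ∧
    ω₁*(u + x₁)^2 + ω₂*(u + x₂)^2 = m₀*u^2 + m₂ ∧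
    ω₁*(u + x₁)^3 + ω₂*(u + x₂)^3 = m₀*u^3 + 3*m₂*u + m₃ :=
  ⟨h₀, by linear_combination u * h₀ + h₁,
    by linear_combination u^2 * h₀ + 2*u * h₁ + h₂,
    by linear_combination u^3 * h₀ + 3*u^2 * h₁ + 3*u * h₂ + h₃⟩

/-- the bi-delta abscissas and weights solve the four moment equations. -/
theorem stmt_1 (ρ u p q : ℝ) (hρ : 0 < ρ) (hp : 0 < p)
    (μ₁ μ₂ ω₁ ω₂ : ℝ)
    (hμ₁ : μ₁ = u + q/(2*p) - Real.sqrt (p/ρ + (q/(2*p))^2))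
    (hμ₂ : μ₂ = u + q/(2*p) + Real.sqrt (p/ρ + (q/(2*p))^2))
    (hω₁ : ω₁ = ρ/2 + ρ^2*q / (2 * Real.sqrt (ρ^2*q^2 + 4*ρ*p^3)))
    (hω₂ : ω₂ = ρ/2 - ρ^2*q / (2 * Real.sqrt (ρ^2*q^2 + 4*ρ*p^3))) :
    ω₁ + ω₂ = ρ ∧
    ω₁*μ₁ + ω₂*μ₂ = ρ*u ∧
    ω₁*μ₁^2 + ω₂*μ₂^2 = ρ*u^2 + p ∧
    ω₁*μ₁^3 + ω₂*μ₂^3 = ρ*u^3 + 3*p*u + q := by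
  set δ := q/(2*p) with hδ
  set s := Real.sqrt (p/ρ + δ^2)
  have hs : 0 < s := Real.sqrt_pos.mpr (by positivity)
  have hvar : s^2 - δ^2 = p/ρ := by
    rw [Real.sq_sqrt (by positivity)]
    ring
  have hS : Real.sqrt (ρ^2*q^2 + 4*ρ*p^3) = 2*ρ*p*s := sqrt_sq_mul_sq_add_four_mul_cube hρ hp q
  clear_value s
  have hweight : ρ^2*q / (2 * Real.sqrt (ρ^2*q^2 + 4*ρ*p^3)) = ρ*δ/(2*s) := by
    rw [hS, hδ]
    field_simp
  obtain ⟨h₀, h₁, h₂, h₃⟩ := central_moments_sub_add hs.ne' ρ δ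
  rw [hvar, mul_div_cancel₀ p hρ.ne'] at h₂
  rw [hvar, show 2*ρ*δ*(p/ρ) = q by rw [hδ]; field_simp] at h₃
  rw [hμ₁, hμ₂, add_sub_assoc, add_assoc, hω₁, hω₂, hweight]
  exact moments_add_of_central u h₀ h₁ h₂ h₃
end

section
/- With ρ > 0 and p > 0, and μ₁, μ₂, ω₁, ω₂ defined as the bi-delta quadrature abscissas and weights (μ₁,μ₂ = u + q/(2p) ∓ √(p/ρ + (q/(2p))²), ω₁,ω₂ = ρ/2 ± ρ²q/(2√(ρ²q² + 4ρp³))), the fourth moment closure satisfies ω₁μ₁⁴ + ω₂μ₂⁴ = ρu⁴ + 6pu² + 4uq + q²/p + p²/ρ. -/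
/-- the fourth moment of the bi-delta ansatz. -/
theorem stmt_2 (ρ u p q : ℝ) (hρ : 0 < ρ) (hp : 0 < p)
    (μ₁ μ₂ ω₁ ω₂ : ℝ)
    (hμ₁ : μ₁ = u + q/(2*p) - Real.sqrt (p/ρ + (q/(2*p))^2))
    (hμ₂ : μ₂ = u + q/(2*p) + Real.sqrt (p/ρ + (q/(2*p))^2))
    (hω₁ : ω₁ = ρ/2 + ρ^2*q / (2 * Real.sqrt (ρ^2*q^2 + 4*ρ*p^3)))
    (hω₂ : ω₂ = ρ/2 - ρ^2*q / (2 * Real.sqrt (ρ^2*q^2 + 4*ρ*p^3))) :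
    ω₁*μ₁^4 + ω₂*μ₂^4 = ρ*u^4 + 6*p*u^2 + 4*u*q + q^2/p + p^2/ρ := by
  set s := Real.sqrt (p/ρ + (q/(2*p))^2) with hs_def
  have hvpos : 0 < p/ρ + (q/(2*p))^2 := by positivity
  have hspos : 0 < s := Real.sqrt_pos.mpr hvpos
  have hs2 : s^2 = p/ρ + (q/(2*p))^2 := Real.sq_sqrt hvpos.le
  have hbig : Real.sqrt (ρ^2*q^2 + 4*ρ*p^3) = 2*ρ*p*s := by
    have h : ρ^2*q^2 + 4*ρ*p^3 = (2*ρ*p*s)^2 := by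
      have h2 : (2*ρ*p*s)^2 = 4*ρ^2*p^2*(p/ρ + (q/(2*p))^2) := by
        rw [← hs2]; ring
      rw [h2]; field_simp; ring
    rw [h, Real.sqrt_sq (by positivity)]
  subst hμ₁ hμ₂ hω₁ hω₂
  rw [hbig]
  set m := u + q/(2*p) with hm_def
  have key : (ρ/2 + ρ^2*q / (2 * (2*ρ*p*s)))*(m - s)^4
      + (ρ/2 - ρ^2*q / (2 * (2*ρ*p*s)))*(m + s)^4
      = ρ*(m^4 + 6*m^2*s^2 + s^4) - 2*ρ*q*m*(m^2 + s^2)/p := by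
    field_simp
    ring
  rw [key, show s^4 = (s^2)^2 by ring, hs2, hm_def]
  field_simp
  ring
end

section
/- Let U = (M₀, M₁, M₂, M₃) with M₀ = ρ, M₁ = ρu, M₂ = ρu² + p, M₃ = ρu³ + 3pu + q, ρ > 0, p > 0, and let F(U) = (M₁, M₂, M₃, M̄₄) with M̄₄ = ρu⁴ + 6pu² + 4uq + q²/p + p²/ρ. Then the Jacobian matrix ∂F/∂U has characteristic polynomial with exactly two distinct real roots μ₁ and μ₂ (the bi-delta abscissas), each of algebraic multiplicity 2, and the vector (1, μᵢ, μᵢ², μᵢ³) is a right eigenvector for the eigenvalue μᵢ. -/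
/-!
The flux Jacobian at a bi-delta state is a companion matrix: its first three rows only shift
moments, and its last row is the gradient of `M̄₄`, which turns out to be the coefficient vector
of `(X² - sX + P)²` with `s = 2u + q/p` and `P = u² + uq/p - p/ρ`. The abscissas `μ₁, μ₂` are the
two roots of `X² - sX + P`, distinct because its discriminant `4(p/ρ + (q/2p)²)` is positive, so the
characteristic polynomial is `(X - μ₁)²(X - μ₂)²`. The vector of powers of a root of a companion
matrix's polynomial is always an eigenvector.
-/

open Polynomial

/-- The bi-delta moment-closure flux `F(U) = (M₁, M₂, M₃, M̄₄)` written as a function of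
the conserved moments `U = (M₀, M₁, M₂, M₃)`, with the primitive variables recovered by
`ρ = M₀`, `u = M₁/M₀`, `p = M₂ - ρu²`, `q = M₃ - ρu³ - 3pu`. -/
noncomputable def biDeltaFlux (V : Fin 4 → ℝ) : Fin 4 → ℝ :=
  let ρ := V 0
  let u := V 1 / V 0
  let p := V 2 - ρ * u^2
  let q := V 3 - ρ * u^3 - 3 * p * u
  ![V 1, V 2, V 3, ρ*u^4 + 6*p*u^2 + 4*u*q + q^2/p + p^2/ρ]

open Matrix

section Companion

variable {R : Type*} [CommRing R]

def companion4 (c : Fin 4 → R) : Matrix (Fin 4) (Fin 4) R :=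
  !![0, 1, 0, 0; 0, 0, 1, 0; 0, 0, 0, 1; c 0, c 1, c 2, c 3]

theorem charpoly_companion4 (c : Fin 4 → R) :
    (companion4 c).charpoly
      = X ^ 4 - C (c 3) * X ^ 3 - C (c 2) * X ^ 2 - C (c 1) * X - C (c 0) := by
  simp [companion4, Matrix.charpoly, det_succ_row_zero, Fin.sum_univ_succ, charmatrix_apply,
    Fin.succAbove]
  ring

theorem companion4_mulVec_powers {c : Fin 4 → R} {μ : R}
    (hμ : μ ^ 4 = c 0 + c 1 * μ + c 2 * μ ^ 2 + c 3 * μ ^ 3) :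
    companion4 c *ᵥ ![1, μ, μ ^ 2, μ ^ 3] = μ • ![1, μ, μ ^ 2, μ ^ 3] := by
  ext i
  fin_cases i <;> simp [companion4, mulVec, dotProduct, Fin.sum_univ_four]
  · ring
  · ring
  · linear_combination -hμ

theorem companion4_mulVec_apply_three (c v : Fin 4 → R) : (companion4 c *ᵥ v) 3 = c ⬝ᵥ v := by
  simp [companion4, mulVec, dotProduct, Fin.sum_univ_four]

/-- The coefficients `c` for which `X⁴ - c₃X³ - c₂X² - c₁X - c₀ = (X² - sX + P)²`. -/
def sqQuadraticCoeffs (s P : R) : Fin 4 → R :=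
  ![-P ^ 2, 2 * s * P, -(s ^ 2 + 2 * P), 2 * s]

theorem charpoly_companion4_sqQuadraticCoeffs (a b : R) :
    (companion4 (sqQuadraticCoeffs (a + b) (a * b))).charpoly = (X - C a) ^ 2 * (X - C b) ^ 2 := by
  simp only [charpoly_companion4, sqQuadraticCoeffs, cons_val, map_neg, map_add, map_mul, map_pow,
    map_ofNat]
  ring

theorem companion4_sqQuadraticCoeffs_mulVec_powers (a b : R) :
    companion4 (sqQuadraticCoeffs (a + b) (a * b)) *ᵥ ![1, a, a ^ 2, a ^ 3]
      = a • ![1, a, a ^ 2, a ^ 3] :=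
  companion4_mulVec_powers (by simp [sqQuadraticCoeffs]; ring)

end Companion

section BiDeltaFlux

variable {ρ u p q s P : ℝ}

theorem differentiableAt_biDeltaFlux {V : Fin 4 → ℝ} (h0 : V 0 ≠ 0)
    (hp : V 2 - V 0 * (V 1 / V 0) ^ 2 ≠ 0) : DifferentiableAt ℝ biDeltaFlux V := by
  refine differentiableAt_pi.2 fun i => ?_
  fin_cases i <;> simp only [biDeltaFlux, Fin.zero_eta, Fin.mk_one, Fin.reduceFinMk, cons_val] <;>
    fun_prop (disch := assumption)

theorem hasDerivAt_biDeltaFlux_three_comp {γ : ℝ → Fin 4 → ℝ} {γ' : Fin 4 → ℝ} {t : ℝ}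
    (hγ : HasDerivAt γ γ' t) (hγt : γ t = ![ρ, ρ * u, ρ * u ^ 2 + p, ρ * u ^ 3 + 3 * p * u + q])
    (hρ : ρ ≠ 0) (hp : p ≠ 0) (hs : s = 2 * u + q / p) (hP : P = u ^ 2 + u * q / p - p / ρ) :
    HasDerivAt (fun τ => biDeltaFlux (γ τ) 3) (sqQuadraticCoeffs s P ⬝ᵥ γ') t := by
  have hM := hasDerivAt_pi.1 hγ
  have h0 : γ t 0 = ρ := by simp [hγt]
  have h1 : γ t 1 = ρ * u := by simp [hγt]
  have h2 : γ t 2 = ρ * u ^ 2 + p := by simp [hγt]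
  have h3 : γ t 3 = ρ * u ^ 3 + 3 * p * u + q := by simp [hγt]
  have hp0 : γ t 2 - γ t 0 * (γ t 1 / γ t 0) ^ 2 = p := by
    rw [h0, h1, h2]; field_simp; ring
  have hu_deriv := (hM 1).fun_div (hM 0) (by rw [h0]; exact hρ)
  have hp_deriv := (hM 2).fun_sub ((hM 0).fun_mul (hu_deriv.fun_pow 2))
  have hq_deriv := ((hM 3).fun_sub ((hM 0).fun_mul (hu_deriv.fun_pow 3))).fun_sub
    ((hp_deriv.const_mul 3).fun_mul hu_deriv)
  have hM4_deriv := ((((hM 0).fun_mul (hu_deriv.fun_pow 4)).fun_add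
    ((hp_deriv.const_mul 6).fun_mul (hu_deriv.fun_pow 2))).fun_add
    ((hu_deriv.const_mul 4).fun_mul hq_deriv)).fun_add
    ((hq_deriv.fun_pow 2).fun_div hp_deriv (by rw [hp0]; exact hp))
    |>.fun_add ((hp_deriv.fun_pow 2).fun_div (hM 0) (by rw [h0]; exact hρ))
  refine hM4_deriv.congr_deriv ?_
  simp only [hp0]
  simp only [h0, h1, h3, mul_div_cancel_left₀ u hρ, sqQuadraticCoeffs, dotProduct,
    Fin.sum_univ_four, cons_val]
  subst hs hP
  field_simp
  ring

theorem hasDerivAt_biDeltaFlux_comp {γ : ℝ → Fin 4 → ℝ} {γ' : Fin 4 → ℝ} {t : ℝ}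
    (hγ : HasDerivAt γ γ' t) (hγt : γ t = ![ρ, ρ * u, ρ * u ^ 2 + p, ρ * u ^ 3 + 3 * p * u + q])
    (hρ : ρ ≠ 0) (hp : p ≠ 0) (hs : s = 2 * u + q / p) (hP : P = u ^ 2 + u * q / p - p / ρ) :
    HasDerivAt (fun τ => biDeltaFlux (γ τ)) (companion4 (sqQuadraticCoeffs s P) *ᵥ γ') t := by
  have hM := hasDerivAt_pi.1 hγ
  refine hasDerivAt_pi.2 fun i => ?_
  fin_cases i
  · simpa [biDeltaFlux, companion4, mulVec, dotProduct, Fin.sum_univ_four] using hM 1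
  · simpa [biDeltaFlux, companion4, mulVec, dotProduct, Fin.sum_univ_four] using hM 2
  · simpa [biDeltaFlux, companion4, mulVec, dotProduct, Fin.sum_univ_four] using hM 3
  · simpa [companion4_mulVec_apply_three] using
      hasDerivAt_biDeltaFlux_three_comp hγ hγt hρ hp hs hP

theorem fderiv_biDeltaFlux_apply (hρ : ρ ≠ 0) (hp : p ≠ 0) (hs : s = 2 * u + q / p)
    (hP : P = u ^ 2 + u * q / p - p / ρ) (i : Fin 4) (v : Fin 4 → ℝ) :
    fderiv ℝ (fun V => biDeltaFlux V i) ![ρ, ρ * u, ρ * u ^ 2 + p, ρ * u ^ 3 + 3 * p * u + q] v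
      = (companion4 (sqQuadraticCoeffs s P) *ᵥ v) i := by
  set U₀ : Fin 4 → ℝ := ![ρ, ρ * u, ρ * u ^ 2 + p, ρ * u ^ 3 + 3 * p * u + q]
  have hD : DifferentiableAt ℝ biDeltaFlux U₀ :=
    differentiableAt_biDeltaFlux (by simpa [U₀] using hρ) (by simpa [U₀, hρ] using hp)
  have hline : HasLineDerivAt ℝ biDeltaFlux (companion4 (sqQuadraticCoeffs s P) *ᵥ v) U₀ v := by
    refine hasDerivAt_biDeltaFlux_comp ?_ (by simp [U₀]) hρ hp hs hP
    simpa using ((hasDerivAt_id (0 : ℝ)).smul_const v).const_add U₀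
  rw [fderiv_apply hD i, ContinuousLinearMap.comp_apply, ContinuousLinearMap.proj_apply,
    ← hD.lineDeriv_eq_fderiv, hline.lineDeriv]

end BiDeltaFlux

/-- weak hyperbolicity of the bi-delta system: the flux Jacobian has
characteristic polynomial `(X-μ₁)²(X-μ₂)²` with `μ₁ ≠ μ₂`, and `(1, μᵢ, μᵢ², μᵢ³)` is a
right eigenvector for `μᵢ`. -/
theorem stmt_4 (ρ u p q : ℝ) (hρ : 0 < ρ) (hp : 0 < p)
    (μ₁ μ₂ : ℝ)
    (hμ₁ : μ₁ = u + q/(2*p) - Real.sqrt (p/ρ + (q/(2*p))^2))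
    (hμ₂ : μ₂ = u + q/(2*p) + Real.sqrt (p/ρ + (q/(2*p))^2))
    (U₀ : Fin 4 → ℝ)
    (hU₀ : U₀ = ![ρ, ρ*u, ρ*u^2 + p, ρ*u^3 + 3*p*u + q])
    (J : Matrix (Fin 4) (Fin 4) ℝ)
    (hJ : ∀ i j, J i j = fderiv ℝ (fun V => biDeltaFlux V i) U₀ (Pi.single j 1)) :
    μ₁ ≠ μ₂ ∧
    J.charpoly = (X - C μ₁)^2 * (X - C μ₂)^2 ∧
    J.mulVec ![1, μ₁, μ₁^2, μ₁^3] = μ₁ • ![1, μ₁, μ₁^2, μ₁^3] ∧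
    J.mulVec ![1, μ₂, μ₂^2, μ₂^3] = μ₂ • ![1, μ₂, μ₂^2, μ₂^3] := by
  have hd : 0 < p / ρ + (q / (2 * p)) ^ 2 := by positivity
  have hsum : μ₁ + μ₂ = 2 * u + q / p := by rw [hμ₁, hμ₂]; field_simp; ring
  have hprod : μ₁ * μ₂ = u ^ 2 + u * q / p - p / ρ := by
    rw [hμ₁, hμ₂]
    linear_combination -Real.sq_sqrt hd.le
  have hJ' : J = companion4 (sqQuadraticCoeffs (μ₁ + μ₂) (μ₁ * μ₂)) := by
    ext i j
    rw [hJ, hU₀, fderiv_biDeltaFlux_apply hρ.ne' hp.ne' hsum hprod, mulVec_single_one, col_apply]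
  refine ⟨?_, ?_, ?_, ?_⟩
  · have := Real.sqrt_pos.2 hd
    rw [hμ₁, hμ₂]; intro h; linarith
  · rw [hJ', charpoly_companion4_sqQuadraticCoeffs]
  · rw [hJ', companion4_sqQuadraticCoeffs_mulVec_powers]
  · rw [hJ', add_comm, mul_comm, companion4_sqQuadraticCoeffs_mulVec_powers]
end

section
/- Suppose ρ > 0, p > 0, q ≠ 0, and r ≥ (p³ + ρq²)/(ρp). Then the cubic polynomial P(α) = 2p³α³ + (ρr − 3p²)pα − ρq² has exactly one root in the interval (0, 1]. -/
/-- the bi-Gaussian realizability cubic has exactly one root in `(0,1]`. -/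
theorem stmt_6 (ρ p q r : ℝ) (hρ : 0 < ρ) (hp : 0 < p) (hq : q ≠ 0)
    (hr : (p^3 + ρ*q^2)/(ρ*p) ≤ r) :
    ∃! α : ℝ, α ∈ Set.Ioc (0:ℝ) 1 ∧
      2*p^3*α^3 + (ρ*r - 3*p^2)*p*α - ρ*q^2 = 0 := by
  have hq2 : 0 < q^2 := by positivity
  set f : ℝ → ℝ := fun α => 2*p^3*α^3 + (ρ*r - 3*p^2)*p*α - ρ*q^2 with hf
  have hr' : p^3 + ρ*q^2 ≤ r * (ρ*p) := (div_le_iff₀ (by positivity)).mp hr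
  have hf1 : 0 ≤ f 1 := by simp only [hf]; nlinarith
  have hf0 : f 0 < 0 := by simp only [hf]; nlinarith
  have hcont : ContinuousOn f (Set.Icc 0 1) := by fun_prop
  have hmem : (0:ℝ) ∈ Set.Icc (f 0) (f 1) := ⟨hf0.le, hf1⟩
  obtain ⟨α, hα, hfα⟩ := intermediate_value_Icc (by norm_num : (0:ℝ) ≤ 1) hcont hmem
  have hα0 : 0 < α := by
    rcases lt_or_eq_of_le hα.1 with h | h
    · exact h
    · rw [← h] at hfα; exact absurd hfα hf0.ne
  -- uniqueness helper
  have uniq : ∀ a b : ℝ, 0 < a → 0 < b → f a = 0 → f b = 0 → a = b := by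
    intro a b ha hb ea eb
    by_contra hne
    have key : (b - a) * (2*p^3*a*b*(a+b) + ρ*q^2) = 0 := by
      simp only [hf] at ea eb
      linear_combination a*eb - b*ea
    rcases mul_eq_zero.mp key with h | h
    · exact hne (by linarith [sub_eq_zero.mp h])
    · nlinarith [mul_pos (mul_pos ha hb) (add_pos ha hb), pow_pos hp 3]
  refine ⟨α, ⟨⟨hα0, hα.2⟩, hfα⟩, ?_⟩
  rintro β ⟨⟨hβ0, hβ1⟩, hfβ⟩
  exact uniq β α hβ0 hα0 hfβ hfα
end

section
/- Let ρ > 0, p > 0, α ∈ (0,1], and define μ₁, μ₂ = u + q/(2pα) ∓ √(pα/ρ + (q/(2pα))²) and ω₁, ω₂ = ρ/2 ± ρ²q/(2√(ρ²q² + 4ρp³α³)). Then ω₁ + ω₂ = ρ, ω₁μ₁ + ω₂μ₂ = ρu, ω₁μ₁² + ω₂μ₂² = ρu² + αp, and ω₁μ₁³ + ω₂μ₂³ = ρu³ + 3αpu + q. -/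
/-!
Write `c = q/(2pα)` and `s = √(pα/ρ + c²)`, so that `s² - c² = pα/ρ`. The nodes are `u + c ∓ s`
and, since `√(ρ²q² + 4ρp³α³) = 2pαρs`, the weights are `ρ/2 ± ρc/(2s)`. For any such two-point
rule the central moments about `u` are `ρ, 0, ρ(s² - c²), 2ρc(s² - c²)`, i.e. `ρ, 0, pα, q`.
-/

theorem two_point_moments (ρ u c s : ℝ) (hs : s ≠ 0) :
    let ω₁ := ρ/2 + ρ*c/(2*s)
    let ω₂ := ρ/2 - ρ*c/(2*s)
    let μ₁ := u + c - s
    let μ₂ := u + c + s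
    ω₁ + ω₂ = ρ ∧
    ω₁*μ₁ + ω₂*μ₂ = ρ*u ∧
    ω₁*μ₁^2 + ω₂*μ₂^2 = ρ*u^2 + ρ*(s^2 - c^2) ∧
    ω₁*μ₁^3 + ω₂*μ₂^3 = ρ*u^3 + 3*ρ*(s^2 - c^2)*u + 2*ρ*c*(s^2 - c^2) := by
  intro ω₁ ω₂ μ₁ μ₂
  refine ⟨by ring, ?_, ?_, ?_⟩ <;>
  · simp only [ω₁, ω₂, μ₁, μ₂]
    field_simp
    ring

theorem sqrt_weight_discriminant {ρ p α : ℝ} (hρ : 0 < ρ) (hp : 0 < p) (hα : 0 < α) (q : ℝ) :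
    Real.sqrt (ρ^2*q^2 + 4*ρ*p^3*α^3) = 2*p*α*ρ * Real.sqrt (p*α/ρ + (q/(2*p*α))^2) := by
  have hfactor : ρ^2*q^2 + 4*ρ*p^3*α^3 = (2*p*α*ρ)^2 * (p*α/ρ + (q/(2*p*α))^2) := by
    field_simp
    ring
  rw [hfactor, Real.sqrt_mul (by positivity), Real.sqrt_sq (by positivity)]

/-- the bi-Gaussian abscissas and weights solve the first four
moment-matching equations. -/
theorem stmt_9 (ρ u p q α : ℝ) (hρ : 0 < ρ) (hp : 0 < p) (hα : α ∈ Set.Ioc (0:ℝ) 1)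
    (μ₁ μ₂ ω₁ ω₂ : ℝ)
    (hμ₁ : μ₁ = u + q/(2*p*α) - Real.sqrt (p*α/ρ + (q/(2*p*α))^2))
    (hμ₂ : μ₂ = u + q/(2*p*α) + Real.sqrt (p*α/ρ + (q/(2*p*α))^2))
    (hω₁ : ω₁ = ρ/2 + ρ^2*q / (2 * Real.sqrt (ρ^2*q^2 + 4*ρ*p^3*α^3)))
    (hω₂ : ω₂ = ρ/2 - ρ^2*q / (2 * Real.sqrt (ρ^2*q^2 + 4*ρ*p^3*α^3))) :
    ω₁ + ω₂ = ρ ∧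
    ω₁*μ₁ + ω₂*μ₂ = ρ*u ∧
    ω₁*μ₁^2 + ω₂*μ₂^2 = ρ*u^2 + α*p ∧
    ω₁*μ₁^3 + ω₂*μ₂^3 = ρ*u^3 + 3*α*p*u + q := by
  have hα₀ : 0 < α := hα.1
  rw [sqrt_weight_discriminant hρ hp hα₀] at hω₁ hω₂
  set c := q/(2*p*α) with hc
  set s := Real.sqrt (p*α/ρ + c^2)
  have hs2 : s^2 = p*α/ρ + c^2 := Real.sq_sqrt (by positivity)
  have hs : s ≠ 0 := (Real.sqrt_pos.mpr (by positivity)).ne'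
  clear_value c s
  have hweight : ρ^2*q / (2 * (2*p*α*ρ*s)) = ρ*c/(2*s) := by
    rw [hc]
    field_simp
  have hvar : ρ*(s^2 - c^2) = α*p := by
    rw [hs2]
    field_simp
    ring
  have hskew : 2*ρ*c*(s^2 - c^2) = q := by
    calc 2*ρ*c*(s^2 - c^2) = 2*c*(ρ*(s^2 - c^2)) := by ring
      _ = q := by rw [hvar, hc]; field_simp [hα₀.ne']
  rw [hweight] at hω₁ hω₂
  subst hμ₁ hμ₂ hω₁ hω₂
  obtain ⟨h0, h1, h2, h3⟩ := two_point_moments ρ u c s hs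
  refine ⟨h0, h1, ?_, ?_⟩
  · rw [h2, hvar]
  · rw [h3, mul_assoc 3, hvar, hskew]
    ring
end

section
/- Let ρ > 0, p > 0, and let α ∈ (0,1] satisfy 2p³α³ + (ρr − 3p²)pα − ρq² = 0. Define μ₁, μ₂ = u + q/(2pα) ∓ √(pα/ρ + (q/(2pα))²) and ω₁, ω₂ = ρ/2 ± ρ²q/(2√(ρ²q² + 4ρp³α³)). Then ω₁μ₁⁴ + ω₂μ₂⁴ = ρu⁴ + 6αpu² + 4qu + r + 3p²(α² − 1)/ρ. -/
/-- if `α ∈ (0,1]` solves the bi-Gaussian realizability cubic, then the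
abscissas and weights match the fifth moment equation. -/
theorem stmt_10 (ρ u p q r α : ℝ) (hρ : 0 < ρ) (hp : 0 < p)
    (hα : α ∈ Set.Ioc (0:ℝ) 1)
    (hcubic : 2*p^3*α^3 + (ρ*r - 3*p^2)*p*α - ρ*q^2 = 0)
    (μ₁ μ₂ ω₁ ω₂ : ℝ)
    (hμ₁ : μ₁ = u + q/(2*p*α) - Real.sqrt (p*α/ρ + (q/(2*p*α))^2))
    (hμ₂ : μ₂ = u + q/(2*p*α) + Real.sqrt (p*α/ρ + (q/(2*p*α))^2))
    (hω₁ : ω₁ = ρ/2 + ρ^2*q / (2 * Real.sqrt (ρ^2*q^2 + 4*ρ*p^3*α^3)))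
    (hω₂ : ω₂ = ρ/2 - ρ^2*q / (2 * Real.sqrt (ρ^2*q^2 + 4*ρ*p^3*α^3))) :
    ω₁*μ₁^4 + ω₂*μ₂^4 = ρ*u^4 + 6*α*p*u^2 + 4*q*u + r + 3*p^2*(α^2 - 1)/ρ := by
  obtain ⟨hα0, hα1⟩ := hα
  have hpα : 0 < p * α := mul_pos hp hα0
  set s := Real.sqrt (p*α/ρ + (q/(2*p*α))^2) with hs
  have harg : 0 < p*α/ρ + (q/(2*p*α))^2 := by positivity
  have hspos : 0 < s := Real.sqrt_pos.mpr harg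
  have hs2 : s^2 = p*α/ρ + (q/(2*p*α))^2 := Real.sq_sqrt harg.le
  have ht : Real.sqrt (ρ^2*q^2 + 4*ρ*p^3*α^3) = 2*ρ*p*α * s := by
    rw [show ρ^2*q^2 + 4*ρ*p^3*α^3 = (2*ρ*p*α)^2 * (p*α/ρ + (q/(2*p*α))^2) by
      field_simp; ring]
    rw [Real.sqrt_mul (sq_nonneg _), Real.sqrt_sq (by positivity)]
  rw [ht] at hω₁ hω₂
  subst hμ₁ hμ₂ hω₁ hω₂
  have hr : r = (3*p^2 - 2*p^2*α^2)/ρ + q^2/(p*α) := by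
    field_simp
    nlinarith [hcubic]
  have key : (ρ/2 + ρ^2*q / (2 * (2*ρ*p*α*s))) * (u + q/(2*p*α) - s)^4
      + (ρ/2 - ρ^2*q / (2 * (2*ρ*p*α*s))) * (u + q/(2*p*α) + s)^4
      = ρ*((u + q/(2*p*α))^4 + 6*(u + q/(2*p*α))^2*s^2 + (s^2)^2)
        - 4*ρ*(q/(2*p*α))*((u + q/(2*p*α))^3 + (u + q/(2*p*α))*s^2) := by
    field_simp
    ring
  rw [key, hs2, hr]
  field_simp
  ring
end

section
/- Suppose ρ > 0, p > 0, and q²/p + p²/ρ ≤ r ≤ 13q²/(3p) + 33p²/(13ρ). Then the cubic P(α) = 13p³α³ − 6p³α² + αp(5rρ − 12p²) − 5ρq² has exactly one root in the interval [3/13, 1]. -/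
/-- Uniqueness helper: two roots of the cubic in `[3/13, 1]` must coincide. -/
lemma stmt_12_aux (ρ p q r x y : ℝ) (hρ : 0 < ρ) (hp : 0 < p)
    (hx1 : (3/13 : ℝ) ≤ x) (hy1 : (3/13 : ℝ) ≤ y) (hxy : x < y)
    (hx : 13*p^3*x^3 - 6*p^3*x^2 + x*p*(5*r*ρ - 12*p^2) - 5*ρ*q^2 = 0)
    (hy : 13*p^3*y^3 - 6*p^3*y^2 + y*p*(5*r*ρ - 12*p^2) - 5*ρ*q^2 = 0) : False := by
  have hne : x - y ≠ 0 := by intro h; nlinarith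
  have key : (x - y) * (13*p^3*(x^2 + x*y + y^2) - 6*p^3*(x+y) + p*(5*r*ρ - 12*p^2)) = 0 := by
    linear_combination hx - hy
  have hB : 13*p^3*(x^2 + x*y + y^2) - 6*p^3*(x+y) + p*(5*r*ρ - 12*p^2) = 0 :=
    (mul_eq_zero.mp key).resolve_left hne
  have h5 : 5*ρ*q^2 = p^3*x*y*(6 - 13*x - 13*y) := by
    linear_combination x * hB - hx
  have hxpos : 0 < x := by linarith
  have hypos : 0 < y := by linarith
  have hneg : 6 - 13*x - 13*y < 0 := by linarith
  have hq : 0 ≤ 5*ρ*q^2 := by positivity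
  nlinarith [mul_pos (mul_pos (pow_pos hp 3) hxpos) hypos]

/-- the bi-B-spline realizability cubic has exactly one root in `[3/13, 1]`. -/
theorem stmt_12 (ρ p q r : ℝ) (hρ : 0 < ρ) (hp : 0 < p)
    (hr₁ : q^2/p + p^2/ρ ≤ r) (hr₂ : r ≤ 13*q^2/(3*p) + 33*p^2/(13*ρ)) :
    ∃! α : ℝ, α ∈ Set.Icc (3/13 : ℝ) 1 ∧
      13*p^3*α^3 - 6*p^3*α^2 + α*p*(5*r*ρ - 12*p^2) - 5*ρ*q^2 = 0 := by
  have hp' : p ≠ 0 := ne_of_gt hp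
  have hρ' : ρ ≠ 0 := ne_of_gt hρ
  have hpρ : (0:ℝ) < p*ρ := mul_pos hp hρ
  have hr₁' : q^2*ρ + p^3 ≤ r*(p*ρ) := by
    have heq : q^2/p + p^2/ρ = (q^2*ρ + p^3)/(p*ρ) := by field_simp
    rw [heq, div_le_iff₀ hpρ] at hr₁
    linarith
  have hr₂' : r*(39*(p*ρ)) ≤ 169*(q^2*ρ) + 99*p^3 := by
    have h39 : (0:ℝ) < 39*(p*ρ) := by positivity
    have heq : 13*q^2/(3*p) + 33*p^2/(13*ρ) = (169*(q^2*ρ) + 99*p^3)/(39*(p*ρ)) := by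
      field_simp; ring
    rw [heq, le_div_iff₀ h39] at hr₂
    linarith
  set f : ℝ → ℝ := fun α => 13*p^3*α^3 - 6*p^3*α^2 + α*p*(5*r*ρ - 12*p^2) - 5*ρ*q^2 with hf
  have hcont : ContinuousOn f (Set.Icc (3/13 : ℝ) 1) := by
    apply Continuous.continuousOn; continuity
  have hfa : f (3/13) ≤ 0 := by
    show 13*p^3*(3/13:ℝ)^3 - 6*p^3*(3/13:ℝ)^2 + (3/13)*p*(5*r*ρ - 12*p^2) - 5*ρ*q^2 ≤ 0
    nlinarith [hr₂']
  have hfb : 0 ≤ f 1 := by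
    show (0:ℝ) ≤ 13*p^3*1^3 - 6*p^3*1^2 + 1*p*(5*r*ρ - 12*p^2) - 5*ρ*q^2
    nlinarith [hr₁']
  have hmem : (0:ℝ) ∈ Set.Icc (f (3/13)) (f 1) := ⟨hfa, hfb⟩
  have hsub := intermediate_value_Icc (by norm_num : (3/13:ℝ) ≤ 1) hcont
  obtain ⟨α, hαmem, hα0⟩ := hsub hmem
  refine ⟨α, ⟨hαmem, hα0⟩, ?_⟩
  rintro y ⟨⟨hy1, hy2⟩, hyroot⟩
  by_contra hne
  rcases lt_or_gt_of_ne hne with h | h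
  · exact stmt_12_aux ρ p q r y α hρ hp hy1 hαmem.1 h hyroot hα0
  · exact stmt_12_aux ρ p q r α y hρ hp hαmem.1 hy1 h hα0 hyroot
end

section
/- Under the hypotheses ρ > 0, p > 0, q²/p + p²/ρ ≤ r ≤ 13q²/(3p) + 33p²/(13ρ), the cubic P(α) = 13p³α³ − 6p³α² + αp(5rρ − 12p²) − 5ρq² satisfies P(3/13) ≤ 0, P(1) ≥ 0, and P''(α) > 0 for all α > 2/13. -/
/-!
At `α = 1` and `α = 3/13` the cubic is a positive multiple of `r` minus, respectively, its lower
and its upper bound; its second derivative `6p³(13α - 2)` is positive past `2/13`.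
-/

theorem hasDerivAt_cubic (a b c d x : ℝ) :
    HasDerivAt (fun x => a * x ^ 3 + b * x ^ 2 + c * x + d) (3 * a * x ^ 2 + 2 * b * x + c) x := by
  have h := ((((hasDerivAt_pow 3 x).const_mul a).add ((hasDerivAt_pow 2 x).const_mul b)).add
    ((hasDerivAt_id x).const_mul c)).add_const d
  exact h.congr_deriv (by norm_num; ring)

theorem deriv_deriv_cubic (a b c d x : ℝ) :
    deriv (deriv fun x => a * x ^ 3 + b * x ^ 2 + c * x + d) x = 6 * a * x + 2 * b := by
  have h : deriv (fun x => a * x ^ 3 + b * x ^ 2 + c * x + d)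
      = fun x => 0 * x ^ 3 + 3 * a * x ^ 2 + 2 * b * x + c := by
    funext x
    rw [(hasDerivAt_cubic a b c d x).deriv]
    ring
  rw [h, (hasDerivAt_cubic 0 (3 * a) (2 * b) c x).deriv]
  ring

def realizabilityCubic (ρ p q r α : ℝ) : ℝ :=
  13*p^3*α^3 - 6*p^3*α^2 + α*p*(5*r*ρ - 12*p^2) - 5*ρ*q^2

section RealizabilityCubic

variable (ρ p q r : ℝ)

theorem realizabilityCubic_one (hρ : ρ ≠ 0) (hp : p ≠ 0) :
    realizabilityCubic ρ p q r 1 = 5 * ρ * p * (r - (q^2/p + p^2/ρ)) := by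
  unfold realizabilityCubic
  field_simp
  ring

theorem realizabilityCubic_three_div_thirteen (hρ : ρ ≠ 0) (hp : p ≠ 0) :
    realizabilityCubic ρ p q r (3/13) =
      15/13 * ρ * p * (r - (13*q^2/(3*p) + 33*p^2/(13*ρ))) := by
  unfold realizabilityCubic
  field_simp
  ring

theorem deriv_deriv_realizabilityCubic (α : ℝ) :
    deriv (deriv (realizabilityCubic ρ p q r)) α = 6 * p^3 * (13*α - 2) := by
  have h : realizabilityCubic ρ p q r =
      fun α => 13*p^3 * α^3 + (-6*p^3) * α^2 + p*(5*r*ρ - 12*p^2) * α + (-5*ρ*q^2) := by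
    funext α
    unfold realizabilityCubic
    ring
  rw [h, deriv_deriv_cubic]
  ring

end RealizabilityCubic

/-- sign and convexity facts for the bi-B-spline realizability cubic
`P(α) = 13p³α³ − 6p³α² + αp(5rρ − 12p²) − 5ρq²`. -/
theorem stmt_13 (ρ p q r : ℝ) (hρ : 0 < ρ) (hp : 0 < p)
    (hr₁ : q^2/p + p^2/ρ ≤ r) (hr₂ : r ≤ 13*q^2/(3*p) + 33*p^2/(13*ρ))
    (P : ℝ → ℝ)
    (hP : ∀ α, P α = 13*p^3*α^3 - 6*p^3*α^2 + α*p*(5*r*ρ - 12*p^2) - 5*ρ*q^2) :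
    P (3/13) ≤ 0 ∧ 0 ≤ P 1 ∧ ∀ α : ℝ, 2/13 < α → 0 < deriv (deriv P) α := by
  obtain rfl : P = realizabilityCubic ρ p q r := funext hP
  refine ⟨?_, ?_, fun α hα => ?_⟩
  · rw [realizabilityCubic_three_div_thirteen ρ p q r hρ.ne' hp.ne']
    exact mul_nonpos_of_nonneg_of_nonpos (by positivity) (sub_nonpos.2 hr₂)
  · rw [realizabilityCubic_one ρ p q r hρ.ne' hp.ne']
    exact mul_nonneg (by positivity) (sub_nonneg.2 hr₁)
  · rw [deriv_deriv_realizabilityCubic]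
    exact mul_pos (by positivity) (by linarith)
end

section
/- Let ρ > 0, p > 0, α ∈ [3/13, 1] with 13p³α³ − 6p³α² + αp(5rρ − 12p²) − 5ρq² = 0, and let μ₁, μ₂ = u + q/(2pα) ∓ √(pα/ρ + (q/(2pα))²), ω₁, ω₂ = ρ/2 ± ρ²q/(2√(ρ²q² + 4ρp³α³)). Then ω₁μ₁⁴ + ω₂μ₂⁴ = ρu⁴ + 4qu + 6αpu² + r + (6p²/(5ρ))(3α + 2)(α − 1). -/
/-- if `α ∈ [3/13,1]` solves the bi-B-spline realizability cubic, then the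
abscissas and weights match the modified fourth moment equation. -/
theorem stmt_15 (ρ u p q r α : ℝ) (hρ : 0 < ρ) (hp : 0 < p)
    (hα : α ∈ Set.Icc (3/13 : ℝ) 1)
    (hcubic : 13*p^3*α^3 - 6*p^3*α^2 + α*p*(5*r*ρ - 12*p^2) - 5*ρ*q^2 = 0)
    (μ₁ μ₂ ω₁ ω₂ : ℝ)
    (hμ₁ : μ₁ = u + q/(2*p*α) - Real.sqrt (p*α/ρ + (q/(2*p*α))^2))
    (hμ₂ : μ₂ = u + q/(2*p*α) + Real.sqrt (p*α/ρ + (q/(2*p*α))^2))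
    (hω₁ : ω₁ = ρ/2 + ρ^2*q / (2 * Real.sqrt (ρ^2*q^2 + 4*ρ*p^3*α^3)))
    (hω₂ : ω₂ = ρ/2 - ρ^2*q / (2 * Real.sqrt (ρ^2*q^2 + 4*ρ*p^3*α^3))) :
    ω₁*μ₁^4 + ω₂*μ₂^4 =
      ρ*u^4 + 4*q*u + 6*α*p*u^2 + r + 6*p^2/(5*ρ) * (3*α + 2) * (α - 1) := by
  have hα0 : 0 < α := lt_of_lt_of_le (by norm_num) hα.1
  set s := Real.sqrt (p*α/ρ + (q/(2*p*α))^2) with hs_def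
  have hApos : 0 < p*α/ρ + (q/(2*p*α))^2 := by positivity
  have hs0 : 0 < s := Real.sqrt_pos.mpr hApos
  have hs2 : s^2 = p*α/ρ + (q/(2*p*α))^2 := Real.sq_sqrt hApos.le
  have hS : Real.sqrt (ρ^2*q^2 + 4*ρ*p^3*α^3) = 2*ρ*p*α*s := by
    rw [show ρ^2*q^2 + 4*ρ*p^3*α^3 = (2*ρ*p*α*s)^2 by
      rw [mul_pow, hs2]; field_simp; ring]
    exact Real.sqrt_sq (by positivity)
  have hr : r = (5*ρ*q^2 + 12*α*p^3 + 6*p^3*α^2 - 13*p^3*α^3)/(5*α*p*ρ) := by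
    field_simp
    linarith [hcubic]
  have hexp : ω₁*μ₁^4 + ω₂*μ₂^4 =
      ρ*((u + q/(2*p*α))^4 + 6*(u + q/(2*p*α))^2*s^2 + s^4)
        - (2*ρ*q*(u + q/(2*p*α))/(p*α))*((u + q/(2*p*α))^2 + s^2) := by
    rw [hμ₁, hμ₂, hω₁, hω₂, hS]
    field_simp
    ring
  rw [hexp, hr, show s^4 = (p*α/ρ + (q/(2*p*α))^2)^2 by rw [← hs2]; ring, hs2]
  field_simp
  ring
end
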